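/- Let N ≥ 1, Δt > 0, and let a, b ∈ ℂ^N (extended by a_0 = a_{N+1} = b_0 = b_{N+1} = 0) satisfy the implicit midpoint scheme: for each j = 1,…,N, b_j = a_j + Δt·( −i |m_j|² m_j + 2i \bar{m_j}( m_{j−1}² + m_{j+1}² ) ), where m_j = (a_j + b_j)/2. Then mass is exactly conserved: Σ_{j=1}^N |b_j|² = Σ_{j=1}^N |a_j|². -/
import Mathlib


/-- The implicit midpoint scheme for the toy model system,
with Dirichlet conventions, exactly conserves the mass `∑ |b_j|²`. -/
theorem implicit_midpoint_mass_conservation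
    (N : ℕ) (hN : 1 ≤ N) (Δt : ℝ) (hΔt : 0 < Δt)
    (a b m : ℕ → ℂ)
    (ha0 : a 0 = 0) (haN : a (N + 1) = 0)
    (hb0 : b 0 = 0) (hbN : b (N + 1) = 0)
    (hm : ∀ j, m j = (a j + b j) / 2)
    (hscheme : ∀ j ∈ Finset.Icc 1 N,
      b j = a j + (Δt : ℂ) *
        (-Complex.I * ((Complex.normSq (m j) : ℂ)) * m j
          + 2 * Complex.I * (starRingEnd ℂ) (m j) * ((m (j - 1)) ^ 2 + (m (j + 1)) ^ 2))) :
    ∑ j ∈ Finset.Icc 1 N, Complex.normSq (b j)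
      = ∑ j ∈ Finset.Icc 1 N, Complex.normSq (a j) := by
  set c := starRingEnd ℂ with hc
  have hm0 : m 0 = 0 := by rw [hm, ha0, hb0]; ring
  have hmN : m (N + 1) = 0 := by rw [hm, haN, hbN]; ring
  set H : ℕ → ℂ := fun j => (c (m (j + 1))) ^ 2 * (m j) ^ 2 - (m (j + 1)) ^ 2 * (c (m j)) ^ 2
    with hH
  have key : ∀ j ∈ Finset.Icc 1 N,
      ((Complex.normSq (b j) : ℂ) - (Complex.normSq (a j) : ℂ))
        = (2 * (Δt : ℂ) * Complex.I) * (H (j - 1) - H j) := by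
    intro j hj
    obtain ⟨hj1, hjN⟩ := Finset.mem_Icc.mp hj
    have hjj : j - 1 + 1 = j := Nat.succ_pred_eq_of_pos hj1
    have hb1 := hscheme j hj
    rw [← Complex.mul_conj (m j)] at hb1
    have e1 : b j - a j = (Δt : ℂ) *
        (-Complex.I * (m j * c (m j)) * m j
          + 2 * Complex.I * c (m j) * ((m (j - 1)) ^ 2 + (m (j + 1)) ^ 2)) := by
      rw [hb1]; ring
    have e2 := congrArg c e1
    simp only [map_add, map_mul, map_sub, map_pow, map_neg, map_ofNat,
      Complex.conj_ofReal, Complex.conj_I, hc, Complex.conj_conj] at e2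
    have hmj := hm j
    have hcmj := congrArg c hmj
    simp only [map_add, map_div₀, map_ofNat, hc] at hcmj
    rw [← Complex.mul_conj (b j), ← Complex.mul_conj (a j)]
    simp only [hH, hjj, ← hc]
    linear_combination (c (m j)) * e1 + (m j) * e2
      + (c (a j) - c (b j)) * hmj + (a j - b j) * hcmj
  have hsum : ((∑ j ∈ Finset.Icc 1 N, Complex.normSq (b j) : ℝ) : ℂ)
      - ((∑ j ∈ Finset.Icc 1 N, Complex.normSq (a j) : ℝ) : ℂ) = 0 := by
    push_cast
    rw [← Finset.sum_sub_distrib, Finset.sum_congr rfl key,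
      show Finset.Icc 1 N = Finset.Ico 1 (N+1) from (Finset.Ico_add_one_right_eq_Icc 1 N).symm,
      Finset.sum_Ico_eq_sum_range]
    have : ∀ i ∈ Finset.range (N + 1 - 1),
        (2 * (Δt : ℂ) * Complex.I) * (H (1 + i - 1) - H (1 + i))
          = (2 * (Δt : ℂ) * Complex.I) * (H i - H (i + 1)) := by
      intro i _
      congr 2
      · congr 1; omega
      · congr 1; omega
    rw [Finset.sum_congr rfl this, ← Finset.mul_sum]
    have hN' : N + 1 - 1 = N := by omega
    rw [hN', Finset.sum_range_sub' H]
    have h0 : H 0 = 0 := by simp [hH, hm0]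
    have hNN : H N = 0 := by simp [hH, hmN]
    rw [h0, hNN]
    ring
  have := sub_eq_zero.mp hsum
  exact_mod_cast this
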